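/- arXiv:2206.14470 — 2 statements merged into one kernel-verified Lean document; each statement's English description precedes it below -/
import Mathlib

section
/- Let L be a distributive lattice, let n be a positive integer, and let x_1,...,x_n ∈ L. For every k ∈ {1,...,n}, the supremum over all (n+1−k)-element subsets I of {1,...,n} of the infima ⋀_{i∈I} x_i equals the infimum over all k-element subsets J of {1,...,n} of the suprema ⋁_{j∈J} x_j; that is, ⋁_{|I|=n+1−k} ⋀_{i∈I} x_i = ⋀_{|J|=k} ⋁_{j∈J} x_j. -/
open Finset

/-- The supremum over all subsets `I` of `{1,...,n}` of cardinality `n + 1 - (k+1) = n - k`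
of the infima `⋀_{i ∈ I} x i` (here `k : Fin n` represents the 1-indexed index `k+1`). -/
def MkSupInf {L : Type*} [Lattice L] {n : ℕ} (x : Fin n → L) (k : Fin n) : L :=
  ((univ : Finset (Fin n)).powersetCard (n - k.val)).attach.sup'
    (attach_nonempty_iff.mpr (powersetCard_nonempty.mpr (by simp)))
    fun I => I.1.inf' (card_pos.mp (by
      have h := (mem_powersetCard.mp I.2).2
      have hk := k.isLt
      omega)) x

/-- The infimum over all subsets `J` of `{1,...,n}` of cardinality `k+1`
of the suprema `⋁_{j ∈ J} x j` (here `k : Fin n` represents the 1-indexed index `k+1`). -/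
def MkInfSup {L : Type*} [Lattice L] {n : ℕ} (x : Fin n → L) (k : Fin n) : L :=
  ((univ : Finset (Fin n)).powersetCard (k.val + 1)).attach.inf'
    (attach_nonempty_iff.mpr (powersetCard_nonempty.mpr (by simp [Nat.succ_le_iff])))
    fun J => J.1.sup' (card_pos.mp (by
      have h := (mem_powersetCard.mp J.2).2
      omega)) x

/-- The key identity in a bounded distributive lattice. -/
lemma key_minmax {α : Type*} [DistribLattice α] [BoundedOrder α] {n k : ℕ} (hk : k < n)
    (f : Fin n → α) :
    (((univ : Finset (Fin n)).powersetCard (n - k)).sup fun I => I.inf f) =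
      (((univ : Finset (Fin n)).powersetCard (k + 1)).inf fun J => J.sup f) := by
  apply le_antisymm
  · -- easy direction: any I and J intersect since |I|+|J| = n+1 > n
    refine Finset.sup_le fun I hI => Finset.le_inf fun J hJ => ?_
    have hIc := (mem_powersetCard.mp hI).2
    have hJc := (mem_powersetCard.mp hJ).2
    have hne : (I ∩ J).Nonempty := by
      rw [← Finset.card_pos]
      have h1 : I.card + J.card - (I ∪ J).card ≤ (I ∩ J).card := by
        have := Finset.card_union_add_card_inter I J
        omega
      have h2 : (I ∪ J).card ≤ n := by
        simpa using Finset.card_le_card (Finset.subset_univ (I ∪ J))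
      omega
    obtain ⟨j, hj⟩ := hne
    rw [Finset.mem_inter] at hj
    exact le_trans (Finset.inf_le hj.1) (Finset.le_sup hj.2)
  · -- hard direction: distributivity
    rw [Finset.inf_sup]
    refine Finset.sup_le fun g hg => ?_
    rw [Finset.mem_pi] at hg
    -- the image of the selection function
    set I' : Finset (Fin n) :=
      ((univ : Finset (Fin n)).powersetCard (k + 1)).attach.image (fun J => g J.1 J.2) with hI'
    have hinf : ((univ : Finset (Fin n)).powersetCard (k + 1)).attach.inf
        (fun J => f (g J.1 J.2)) = I'.inf f := by
      rw [hI', Finset.inf_image]; rfl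
    have hIle : I'.card ≤ n := by simpa using Finset.card_le_card (Finset.subset_univ I')
    have hcard : n - k ≤ I'.card := by
      by_contra hlt
      push_neg at hlt
      have hcompl : k + 1 ≤ I'ᶜ.card := by
        have h := Finset.card_compl I'
        rw [Fintype.card_fin] at h
        omega
      obtain ⟨J, hJsub, hJcard⟩ := Finset.exists_subset_card_eq hcompl
      have hJs : J ∈ ((univ : Finset (Fin n)).powersetCard (k + 1)) := by
        rw [Finset.mem_powersetCard]
        exact ⟨Finset.subset_univ _, hJcard⟩
      have hmem : g J hJs ∈ I' := by
        rw [hI', Finset.mem_image]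
        exact ⟨⟨J, hJs⟩, Finset.mem_attach _ _, rfl⟩
      have hmem' : g J hJs ∈ J := hg J hJs
      have := hJsub hmem'
      rw [Finset.mem_compl] at this
      exact this hmem
    obtain ⟨I, hIsub, hIcard⟩ := Finset.exists_subset_card_eq hcard
    calc ((univ : Finset (Fin n)).powersetCard (k + 1)).attach.inf (fun J => f (g J.1 J.2))
        = I'.inf f := hinf
      _ ≤ I.inf f := Finset.inf_mono hIsub
      _ ≤ _ := Finset.le_sup (f := fun (s : Finset (Fin n)) => s.inf f)
          (by rw [Finset.mem_powersetCard]; exact ⟨Finset.subset_univ _, hIcard⟩)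

/-- In a distributive lattice, for each `k ∈ {1,...,n}`, the supremum over all
`(n+1-k)`-element subsets `I` of the infima `⋀_{i ∈ I} x i` equals the infimum over all
`k`-element subsets `J` of the suprema `⋁_{j ∈ J} x j`. -/
theorem statement0 {L : Type*} [DistribLattice L] {n : ℕ} (hn : 0 < n)
    (x : Fin n → L) (k : Fin n) :
    MkSupInf x k = MkInfSup x k := by
  classical
  -- embed into a bounded distributive lattice
  let e : LatticeHom L (WithBot (WithTop L)) :=
    { toFun := fun a => ((a : WithTop L) : WithBot (WithTop L))
      map_sup' := by intro a b; push_cast; rfl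
      map_inf' := by intro a b; push_cast; rfl }
  have he : Function.Injective e := fun a b h => by
    simpa [e] using h
  apply he
  have h1 : e (MkSupInf x k) =
      (((univ : Finset (Fin n)).powersetCard (n - k.val)).sup fun I => I.inf (fun i => e (x i))) := by
    rw [MkSupInf, map_finset_sup']
    rw [Finset.sup'_eq_sup]
    rw [← Finset.sup_attach (((univ : Finset (Fin n)).powersetCard (n - k.val)))
      (fun I => I.inf (fun i => e (x i)))]
    refine Finset.sup_congr rfl fun I _ => ?_
    show e _ = _
    rw [map_finset_inf', Finset.inf'_eq_inf]
    rfl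
  have h2 : e (MkInfSup x k) =
      (((univ : Finset (Fin n)).powersetCard (k.val + 1)).inf fun J => J.sup (fun i => e (x i))) := by
    rw [MkInfSup, map_finset_inf']
    rw [Finset.inf'_eq_inf]
    rw [← Finset.inf_attach (((univ : Finset (Fin n)).powersetCard (k.val + 1)))
      (fun J => J.sup (fun i => e (x i)))]
    refine Finset.inf_congr rfl fun J _ => ?_
    show e _ = _
    rw [map_finset_sup', Finset.sup'_eq_sup]
    rfl
  rw [h1, h2]
  exact key_minmax k.isLt (fun i => e (x i))
end

section
/- Let E be a vector lattice over ℝ, let Y be a real vector space, let n be a positive integer, and let T : E^n → Y be an n-linear map such that T(f_1,...,f_n) = 0 whenever f_1,...,f_n ∈ E⁺ satisfy ⋀_{k=1}^n f_k = 0. Then T(f_1,...,f_n) = 0 whenever f_1,...,f_n ∈ E satisfy ⋀_{k=1}^n |f_k| = 0. -/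
open Finset

/-- If `T : E^n → Y` is an `n`-linear map on a vector lattice `E` such that
`T(f_1,...,f_n) = 0` whenever `f_1,...,f_n ∈ E⁺` satisfy `⋀_{k=1}^n f_k = 0`, then
`T(f_1,...,f_n) = 0` whenever `f_1,...,f_n ∈ E` satisfy `⋀_{k=1}^n |f_k| = 0`. -/
theorem statement15 {E Y : Type*} [Lattice E] [AddCommGroup E] [Module ℝ E]
    [CovariantClass E E (· + ·) (· ≤ ·)] [PosSMulMono ℝ E]
    [AddCommGroup Y] [Module ℝ Y] {n : ℕ} (hn : 0 < n)
    (T : MultilinearMap ℝ (fun _ : Fin n => E) Y)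
    (hT : ∀ f : Fin n → E, (∀ i, 0 ≤ f i) →
      univ.inf' ⟨⟨0, hn⟩, mem_univ _⟩ f = 0 → T f = 0)
    (f : Fin n → E)
    (hf : univ.inf' ⟨⟨0, hn⟩, mem_univ _⟩ (fun k => |f k|) = 0) :
    T f = 0 := by
  -- key: T vanishes on any choice of positive/negative parts
  have key : ∀ g : Fin n → E, (∀ i, 0 ≤ g i) → (∀ i, g i ≤ |f i|) → T g = 0 := by
    intro g hg hgle
    apply hT g hg
    apply le_antisymm
    · rw [← hf]
      exact Finset.le_inf' _ _ fun i _ =>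
        le_trans (Finset.inf'_le _ (mem_univ i)) (hgle i)
    · exact Finset.le_inf' _ _ fun i _ => hg i
  have hsplit : f = (fun i => (f i)⁺) + (fun i => -(f i)⁻) := by
    funext i
    simp [sub_eq_add_neg ((f i)⁺) ((f i)⁻) ▸ posPart_sub_negPart (f i)]
  rw [hsplit, T.map_add_univ]
  apply Finset.sum_eq_zero
  intro s _
  have hpw : (s.piecewise (fun i => (f i)⁺) (fun i => -(f i)⁻))
      = fun i => (if i ∈ s then (1:ℝ) else -1) • (s.piecewise (fun i => (f i)⁺) (fun i => (f i)⁻)) i := by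
    funext i
    by_cases h : i ∈ s <;> simp [Finset.piecewise, h]
  rw [hpw, T.map_smul_univ]
  have habs1 : ∀ a : E, a⁺ ≤ |a| := fun a => by
    rw [← posPart_add_negPart a]; exact le_add_of_nonneg_right (negPart_nonneg a)
  have habs2 : ∀ a : E, a⁻ ≤ |a| := fun a => by
    rw [← posPart_add_negPart a]; exact le_add_of_nonneg_left (posPart_nonneg a)
  have := key (s.piecewise (fun i => (f i)⁺) (fun i => (f i)⁻))
    (fun i => by
      by_cases h : i ∈ s <;> simp [Finset.piecewise, h, posPart_nonneg, negPart_nonneg])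
    (fun i => by
      by_cases h : i ∈ s <;> simp [Finset.piecewise, h, habs1 (f i), habs2 (f i)])
  rw [this, smul_zero]
end
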